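/- The linear map φ_{n-3} : R_{n-3} → R_{n-1}/⟨e_1^{(n-1)}⟩ defined on basis vectors by φ_{n-3}(e_l^{(n-3)}) = (1/l)·\bar{e}_{l+1}^{(n-1)} for l = 1, ..., n-2 is injective and B_2-equivariant, i.e., g.φ_{n-3}(x) = φ_{n-3}(g.x) for every upper triangular g ∈ SL(2,C) and x ∈ R_{n-3}. -/

import Mathlib

/-!
On the basis `e_l = X^{l-1} Y^{d+1-l}` of binary forms of degree `d = n - 3`, the map `φ` is
`x ↦ Y · ∫₀^X x dX`, so it is characterised by `∂_X (φ x) = Y x` together with the fact that it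
raises the degree by two. Injectivity follows because `∂_X` kills the line `⟨Y^{n-1}⟩`.
For equivariance, an upper triangular `g` acts by `X ↦ αX - βY`, `Y ↦ δY` with `αδ = 1`, so by the
chain rule `∂_X (g u) = α · g (∂_X u)`; hence `g (φ x) - φ (g x)` is a form of degree `n - 1`
killed by `∂_X`, and in characteristic zero such a form is a multiple of `Y^{n-1}`.
-/

open MvPolynomial

theorem MvPolynomial.pderiv_aeval {R σ τ : Type*} [CommSemiring R] [Fintype σ]
    (f : σ → MvPolynomial τ R) (j : τ) (p : MvPolynomial σ R) :
    pderiv j (aeval f p) = ∑ i, aeval f (pderiv i p) * pderiv j (f i) := by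
  classical
  induction p using MvPolynomial.induction_on with
  | C a => simp
  | add p q hp hq => simp only [map_add, hp, hq, add_mul, Finset.sum_add_distrib]
  | mul_X p k hp =>
    simp only [map_mul, map_add, aeval_X, pderiv_mul, hp, pderiv_X, add_mul,
      Finset.sum_add_distrib, Finset.sum_mul]
    congr 1
    · exact Finset.sum_congr rfl fun i _ => by ring
    · rw [Fintype.sum_eq_single k fun i hi => by simp [Pi.single_eq_of_ne hi.symm]]
      simp

theorem Finsupp.eq_single_one_degree_of_apply_zero_eq_zero {t : Fin 2 →₀ ℕ} (h0 : t 0 = 0) :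
    t = Finsupp.single 1 t.degree := by
  ext i
  fin_cases i <;> simp [h0, Finsupp.degree_eq_sum, Fin.sum_univ_two]

variable {K : Type*} [Field K]

theorem mem_span_X_one_pow_of_pderiv_zero_eq_zero [CharZero K] {u : MvPolynomial (Fin 2) K}
    {m : ℕ} (hu : u.IsHomogeneous m) (h : pderiv 0 u = 0) :
    u ∈ Submodule.span K {(X 1 : MvPolynomial (Fin 2) K) ^ m} := by
  have hsupp : ∀ t, coeff t u ≠ 0 → t = Finsupp.single 1 m := by
    intro t ht
    have hdeg : t.degree = m := by_contra fun hd => ht (hu.coeff_eq_zero hd)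
    have ht0 : t 0 = 0 := by
      by_contra ht0
      have hcoeff := coeff_pderiv (i := 0) u (t - Finsupp.single 0 1)
      rw [h, coeff_zero, Finsupp.sub_add_single_one_cancel ht0, eq_comm, mul_eq_zero] at hcoeff
      exact hcoeff.elim ht (Nat.cast_add_one_ne_zero _)
    rw [Finsupp.eq_single_one_degree_of_apply_zero_eq_zero ht0, hdeg]
  refine Submodule.mem_span_singleton.2 ⟨coeff (Finsupp.single 1 m) u, ?_⟩
  ext t
  rw [coeff_smul, X_pow_eq_monomial, coeff_monomial]
  by_cases ht : Finsupp.single 1 m = t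
  · simp [ht]
  · rw [if_neg ht, smul_zero]
    by_contra h'
    exact ht (hsupp t (Ne.symm h')).symm

theorem homogeneousSubmodule_fin_two_eq_span (d : ℕ) :
    homogeneousSubmodule (Fin 2) K d =
      Submodule.span K
        {q | ∃ l ∈ Finset.Icc 1 (d + 1), q = X 0 ^ (l - 1) * X 1 ^ (d + 1 - l)} := by
  refine le_antisymm ?_ (Submodule.span_le.2 ?_)
  · rw [homogeneousSubmodule_eq_finsupp_supported, AddMonoidAlgebra.supported_eq_span_single]
    refine Submodule.span_le.2 ?_
    rintro _ ⟨t, ht, rfl⟩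
    simp only [Set.mem_ofPred_eq, Finsupp.degree_eq_sum, Fin.sum_univ_two] at ht
    refine Submodule.subset_span ⟨t 0 + 1, Finset.mem_Icc.2 ⟨by omega, by omega⟩, ?_⟩
    change monomial t 1 = _
    rw [Nat.add_sub_cancel, ← ht, Nat.add_sub_add_right, Nat.add_sub_cancel_left, monomial_eq,
      C_1, one_mul, Finsupp.prod_fintype _ _ fun _ => pow_zero _, Fin.prod_univ_two]
  · rintro _ ⟨l, hl, rfl⟩
    rw [Finset.mem_Icc] at hl
    simpa [show l - 1 + (d + 1 - l) = d by omega] using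
      (isHomogeneous_X_pow (R := K) 0 (l - 1)).mul (isHomogeneous_X_pow 1 (d + 1 - l))

section UpperTriangular

variable (α β δ : K)

/-- `r(A)` for `A = !![δ, β; 0, α]`, as a substitution of the variables `X = X 0`, `Y = X 1`. -/
noncomputable def upperTriangularSubst : Fin 2 → MvPolynomial (Fin 2) K :=
  ![C α * X 0 - C β * X 1, C δ * X 1]

theorem isHomogeneous_aeval_upperTriangularSubst {p : MvPolynomial (Fin 2) K} {m : ℕ}
    (hp : p.IsHomogeneous m) :
    (aeval (upperTriangularSubst α β δ) p).IsHomogeneous m := by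
  simpa only [one_mul] using hp.aeval _ (n := 1) (Fin.forall_fin_two.2
    ⟨(isHomogeneous_C_mul_X α 0).sub (isHomogeneous_C_mul_X β 1), isHomogeneous_C_mul_X δ 1⟩)

theorem pderiv_zero_aeval_upperTriangularSubst (p : MvPolynomial (Fin 2) K) :
    pderiv 0 (aeval (upperTriangularSubst α β δ) p) =
      C α * aeval (upperTriangularSubst α β δ) (pderiv 0 p) := by
  rw [pderiv_aeval, Fin.sum_univ_two]
  simp [upperTriangularSubst, mul_comm]

end UpperTriangular

section Antiderivative

variable {d : ℕ} {φ : MvPolynomial (Fin 2) K →ₗ[K] MvPolynomial (Fin 2) K}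
  (hφ : ∀ l ∈ Finset.Icc 1 (d + 1),
    φ (X 0 ^ (l - 1) * X 1 ^ (d + 1 - l)) = (1 / (l : K)) • (X 0 ^ l * X 1 ^ (d + 2 - l)))

include hφ

theorem homogeneousSubmodule_le_comap_homogeneousSubmodule_add_two :
    homogeneousSubmodule (Fin 2) K d ≤ (homogeneousSubmodule (Fin 2) K (d + 2)).comap φ := by
  rw [homogeneousSubmodule_fin_two_eq_span, Submodule.span_le]
  rintro _ ⟨l, hl, rfl⟩
  rw [SetLike.mem_coe, Submodule.mem_comap, hφ l hl]
  rw [Finset.mem_Icc] at hl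
  refine Submodule.smul_mem _ _ ?_
  simpa [show l + (d + 2 - l) = d + 2 by omega] using
    (isHomogeneous_X_pow (R := K) 0 l).mul (isHomogeneous_X_pow 1 (d + 2 - l))

theorem pderiv_zero_apply_of_mem [CharZero K] {x : MvPolynomial (Fin 2) K}
    (hx : x ∈ homogeneousSubmodule (Fin 2) K d) : pderiv 0 (φ x) = X 1 * x := by
  rw [homogeneousSubmodule_fin_two_eq_span] at hx
  induction hx using Submodule.span_induction with
  | mem y hy =>
    obtain ⟨l, hl, rfl⟩ := hy
    rw [hφ l hl]
    rw [Finset.mem_Icc] at hl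
    have hl0 : (l : K) ≠ 0 := Nat.cast_ne_zero.2 (by omega)
    have hC : C (1 / (l : K)) * (l : MvPolynomial (Fin 2) K) = 1 := by
      rw [← map_natCast C, ← C_mul, one_div_mul_cancel hl0, C_1]
    rw [Derivation.map_smul, pderiv_mul, pderiv_pow, pderiv_pow, pderiv_X_self,
      pderiv_X_of_ne one_ne_zero, show d + 2 - l = d + 1 - l + 1 by omega, pow_succ,
      smul_eq_C_mul]
    linear_combination (X 0 ^ (l - 1) * X 1 ^ (d + 1 - l) * X 1) * hC
  | zero => simp
  | add y z _ _ hy hz => rw [map_add, map_add, hy, hz, mul_add]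
  | smul c y _ hy => rw [map_smul, Derivation.map_smul, hy, mul_smul_comm]

theorem eq_zero_of_apply_mem_span_X_one_pow [CharZero K] {x : MvPolynomial (Fin 2) K}
    (hx : x ∈ homogeneousSubmodule (Fin 2) K d)
    (h : φ x ∈ Submodule.span K {(X 1 : MvPolynomial (Fin 2) K) ^ (d + 2)}) : x = 0 := by
  obtain ⟨c, hc⟩ := Submodule.mem_span_singleton.1 h
  have hder := pderiv_zero_apply_of_mem hφ hx
  rw [← hc, Derivation.map_smul, pderiv_pow, pderiv_X_of_ne one_ne_zero, mul_zero, smul_zero,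
    eq_comm, mul_eq_zero] at hder
  exact hder.resolve_left (X_ne_zero 1)

theorem aeval_upperTriangularSubst_apply_sub_apply_aeval_mem_span [CharZero K] {α β δ : K}
    (hαδ : α * δ = 1) {x : MvPolynomial (Fin 2) K} (hx : x ∈ homogeneousSubmodule (Fin 2) K d) :
    aeval (upperTriangularSubst α β δ) (φ x) -
        φ (aeval (upperTriangularSubst α β δ) x) ∈
      Submodule.span K {(X 1 : MvPolynomial (Fin 2) K) ^ (d + 2)} := by
  have hgx := isHomogeneous_aeval_upperTriangularSubst α β δ hx
  have hφx := homogeneousSubmodule_le_comap_homogeneousSubmodule_add_two hφ hx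
  have hφgx := homogeneousSubmodule_le_comap_homogeneousSubmodule_add_two hφ hgx
  have hCαδ : C α * C δ = (1 : MvPolynomial (Fin 2) K) := by rw [← C_mul, hαδ, C_1]
  refine mem_span_X_one_pow_of_pderiv_zero_eq_zero
    ((isHomogeneous_aeval_upperTriangularSubst α β δ hφx).sub hφgx) ?_
  rw [map_sub, pderiv_zero_aeval_upperTriangularSubst, pderiv_zero_apply_of_mem hφ hx,
    pderiv_zero_apply_of_mem hφ hgx, map_mul, aeval_X,
    show upperTriangularSubst α β δ 1 = C δ * X 1 from rfl]
  linear_combination (X 1 * aeval (upperTriangularSubst α β δ) x) * hCαδ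

end Antiderivative

/-- The linear map `φ_{n-3} : R_{n-3} → R_{n-1}/⟨e₁⟩`, given on basis vectors by
`φ(e_l^{(n-3)}) = (1/l)·\bar e_{l+1}^{(n-1)}` (`l = 1, …, n-2`), is injective and
`B₂`-equivariant.  We formalize it via a linear lift `φ` with values in `R_{n-1}` with
`φ(e_l^{(n-3)}) = (1/l)·e_{l+1}^{(n-1)}`; injectivity and equivariance of the induced map
to the quotient `R_{n-1}/⟨Y^{n-1}⟩` are expressed modulo the line `⟨Y^{n-1}⟩`. -/
theorem phi_injective_and_equivariant (n : ℕ) (hn : 3 ≤ n)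
    (φ : MvPolynomial (Fin 2) ℂ →ₗ[ℂ] MvPolynomial (Fin 2) ℂ)
    (hφ : ∀ l ∈ Finset.Icc 1 (n - 2),
      φ ((X 0 : MvPolynomial (Fin 2) ℂ) ^ (l - 1) * X 1 ^ (n - 2 - l)) =
        (1 / (l : ℂ)) • ((X 0 : MvPolynomial (Fin 2) ℂ) ^ l * X 1 ^ (n - 1 - l))) :
    (∀ x ∈ Submodule.span ℂ
        {q : MvPolynomial (Fin 2) ℂ |
          ∃ l ∈ Finset.Icc 1 (n - 2),
            q = (X 0 : MvPolynomial (Fin 2) ℂ) ^ (l - 1) * X 1 ^ (n - 2 - l)},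
      φ x ∈ Submodule.span ℂ {(X 1 : MvPolynomial (Fin 2) ℂ) ^ (n - 1)} → x = 0) ∧
    (∀ lam b : ℂ, lam ≠ 0 →
      ∀ x ∈ Submodule.span ℂ
        {q : MvPolynomial (Fin 2) ℂ |
          ∃ l ∈ Finset.Icc 1 (n - 2),
            q = (X 0 : MvPolynomial (Fin 2) ℂ) ^ (l - 1) * X 1 ^ (n - 2 - l)},
      (aeval ![C lam⁻¹ * X 0 - C (lam⁻¹ * b) * X 1, C lam * X 1] (φ x) :
          MvPolynomial (Fin 2) ℂ) -
        φ (aeval ![C lam⁻¹ * X 0 - C (lam⁻¹ * b) * X 1, C lam * X 1] x) ∈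
      Submodule.span ℂ {(X 1 : MvPolynomial (Fin 2) ℂ) ^ (n - 1)}) := by
  obtain ⟨d, rfl⟩ : ∃ d, n = d + 3 := ⟨n - 3, by omega⟩
  simp only [show d + 3 - 2 = d + 1 from rfl, show d + 3 - 1 = d + 2 from rfl] at hφ ⊢
  rw [← homogeneousSubmodule_fin_two_eq_span]
  exact ⟨fun x hx => eq_zero_of_apply_mem_span_X_one_pow hφ hx,
    fun lam _ hlam x hx =>
      aeval_upperTriangularSubst_apply_sub_apply_aeval_mem_span hφ (inv_mul_cancel₀ hlam) hx⟩
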